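/- Let X, Y be separable Hilbert spaces, μ a probability measure on X with E‖x‖⁴ < ∞, and Ψ : X → Y measurable and globally L-Lipschitz. For d_X, d_Y ≥ 1 and N ≥ max(d_X, d_Y), let V^X_{d_X,N} and V^Y_{d_Y,N} be the empirical PCA subspaces for the inputs {x_j} and outputs {Ψ(x_j)}, and let Ψ_PCA(x) = Π_{V^Y_{d_Y,N}} Ψ(Π_{V^X_{d_X,N}} x). Then E_{samples} E_{x∼μ} ‖Ψ_PCA(x) − Ψ(x)‖²_Y ≤ 2L²(√(Q d_X/N) + R^μ(V^X_{d_X})) + 2(√(Q d_Y/N) + R^{Ψ_♯μ}(V^Y_{d_Y})) for a constant Q depending only on μ and Ψ_♯μ, where V^X_{d_X}, V^Y_{d_Y} are the optimal (population) PCA subspaces and R^ν(V) = E_{u∼ν}‖u − Π_V u‖². -/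

import Mathlib

/-!
Write `T u = u ⊗ u` in the completed tensor square of a real inner product space, so that
`⟪T u, T v⟫ = ⟪u, v⟫ ^ 2`. The variance captured by an orthonormal `d`-frame `ψ` is then linear in
the moment tensor: `∑ⱼ E⟪ψⱼ, z⟫² = ⟪∑ⱼ T ψⱼ, E[T z]⟫`, and likewise on the sample with the
empirical moment tensor `Ĉ`; moreover `‖∑ⱼ T ψⱼ‖ = √d`. As the empirical PCA frame captures at least
as much sample variance as the population one, its population reconstruction error exceeds that
of the population frame by at most `√d ‖Ĉ - E[T z]‖`. For `N` pairwise independent samples the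
summands `T xₖ - E[T z]` are orthogonal in `L²`, so `E‖Ĉ - E[T z]‖ ≤ √(E‖z‖⁴ / N)`.
Finally `‖Π_Y Ψ(Π_X v) - Ψ v‖² ≤ 2L² ‖v - Π_X v‖² + 2 ‖Ψ v - Π_Y Ψ v‖²` reduces the theorem to this
bound on the input side and on the output side.
-/

open MeasureTheory ProbabilityTheory
open scoped RealInnerProductSpace TensorProduct

section Projection

variable {ι E : Type*} [NormedAddCommGroup E] [InnerProductSpace ℝ E] {φ : ι → E}

theorem Orthonormal.norm_sum_inner_smul_sq (hφ : Orthonormal ℝ φ) (s : Finset ι) (v : E) :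
    ‖∑ j ∈ s, ⟪φ j, v⟫ • φ j‖ ^ 2 = ∑ j ∈ s, ⟪φ j, v⟫ ^ 2 := by
  rw [← real_inner_self_eq_norm_sq, hφ.inner_sum]
  simp [sq]

theorem Orthonormal.norm_sub_sum_inner_smul_sq (hφ : Orthonormal ℝ φ) (s : Finset ι) (v : E) :
    ‖v - ∑ j ∈ s, ⟪φ j, v⟫ • φ j‖ ^ 2 = ‖v‖ ^ 2 - ∑ j ∈ s, ⟪φ j, v⟫ ^ 2 := by
  have hcross : ⟪v, ∑ j ∈ s, ⟪φ j, v⟫ • φ j⟫ = ∑ j ∈ s, ⟪φ j, v⟫ ^ 2 := by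
    simp [inner_sum, real_inner_smul_right, real_inner_comm, sq]
  rw [norm_sub_sq_real, hcross, hφ.norm_sum_inner_smul_sq]
  ring

theorem Orthonormal.norm_sum_inner_smul_le (hφ : Orthonormal ℝ φ) (s : Finset ι) (v : E) :
    ‖∑ j ∈ s, ⟪φ j, v⟫ • φ j‖ ≤ ‖v‖ := by
  refine (pow_le_pow_iff_left₀ (norm_nonneg _) (norm_nonneg _) two_ne_zero).mp ?_
  rw [hφ.norm_sum_inner_smul_sq]
  simpa using hφ.sum_inner_products_le (s := s) v

theorem Orthonormal.norm_sub_sum_inner_smul_sq_le (hφ : Orthonormal ℝ φ) (s : Finset ι) (v : E) :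
    ‖v - ∑ j ∈ s, ⟪φ j, v⟫ • φ j‖ ^ 2 ≤ ‖v‖ ^ 2 := by
  rw [hφ.norm_sub_sum_inner_smul_sq]
  exact sub_le_self _ (Finset.sum_nonneg fun j _ => sq_nonneg _)

theorem Orthonormal.norm_sum_inner_comp_smul_sub_sq_le {X : Type*} [NormedAddCommGroup X]
    (hφ : Orthonormal ℝ φ) (s : Finset ι) {Ψ : X → E} {L : ℝ}
    (hΨ : ∀ x z, ‖Ψ x - Ψ z‖ ≤ L * ‖x - z‖) (u v : X) :
    ‖∑ j ∈ s, ⟪φ j, Ψ u⟫ • φ j - Ψ v‖ ^ 2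
      ≤ 2 * L ^ 2 * ‖v - u‖ ^ 2 + 2 * ‖Ψ v - ∑ j ∈ s, ⟪φ j, Ψ v⟫ • φ j‖ ^ 2 := by
  set a := ∑ j ∈ s, ⟪φ j, Ψ u - Ψ v⟫ • φ j
  set b := Ψ v - ∑ j ∈ s, ⟪φ j, Ψ v⟫ • φ j
  have hsplit : ∑ j ∈ s, ⟪φ j, Ψ u⟫ • φ j - Ψ v = a + -b := by
    simp only [a, b, inner_sub_right, sub_smul, Finset.sum_sub_distrib]
    abel
  have ha : ‖a‖ ≤ L * ‖v - u‖ := by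
    rw [norm_sub_rev v u]
    exact (hφ.norm_sum_inner_smul_le s _).trans (hΨ u v)
  have ha2 := pow_le_pow_left₀ (norm_nonneg a) ha 2
  rw [mul_pow] at ha2
  calc ‖∑ j ∈ s, ⟪φ j, Ψ u⟫ • φ j - Ψ v‖ ^ 2 ≤ (‖a‖ + ‖b‖) ^ 2 := by
        rw [hsplit, ← norm_neg b]
        exact pow_le_pow_left₀ (norm_nonneg _) (norm_add_le _ _) 2
    _ ≤ 2 * (‖a‖ ^ 2 + ‖b‖ ^ 2) := add_sq_le
    _ ≤ 2 * L ^ 2 * ‖v - u‖ ^ 2 + 2 * ‖b‖ ^ 2 := by linarith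

end Projection

section TensorSquare

variable {H : Type*} [NormedAddCommGroup H] [InnerProductSpace ℝ H]

noncomputable def tensorSq (u : H) : UniformSpace.Completion (H ⊗[ℝ] H) :=
  ((u ⊗ₜ[ℝ] u : H ⊗[ℝ] H) : UniformSpace.Completion (H ⊗[ℝ] H))

theorem inner_tensorSq (u v : H) : ⟪tensorSq u, tensorSq v⟫ = ⟪u, v⟫ ^ 2 := by
  rw [tensorSq, tensorSq, UniformSpace.Completion.inner_coe, TensorProduct.inner_tmul, sq]

theorem norm_tensorSq (u : H) : ‖tensorSq u‖ = ‖u‖ ^ 2 := by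
  rw [tensorSq, UniformSpace.Completion.norm_coe, TensorProduct.norm_tmul, sq]

theorem norm_tensorSq_sub_sq (u v : H) :
    ‖tensorSq u - tensorSq v‖ ^ 2 = ‖u‖ ^ 4 - 2 * ⟪u, v⟫ ^ 2 + ‖v‖ ^ 4 := by
  rw [norm_sub_sq_real, inner_tensorSq, norm_tensorSq, norm_tensorSq]
  ring

theorem continuous_tensorSq : Continuous (tensorSq : H → _) := by
  refine continuous_iff_continuousAt.mpr fun u => tendsto_iff_norm_sub_tendsto_zero.mpr ?_
  have hsq : Continuous fun v : H => ‖v‖ ^ 4 - 2 * ⟪v, u⟫ ^ 2 + ‖u‖ ^ 4 := by fun_prop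
  have h0 : ‖u‖ ^ 4 - 2 * ⟪u, u⟫ ^ 2 + ‖u‖ ^ 4 = 0 := by
    rw [real_inner_self_eq_norm_sq]
    ring
  simpa [Function.comp_def, h0, ← norm_tensorSq_sub_sq, Real.sqrt_sq (norm_nonneg _)] using
    (Real.continuous_sqrt.comp hsq).tendsto u

theorem Orthonormal.norm_sum_tensorSq {ι : Type*} {ψ : ι → H} (hψ : Orthonormal ℝ ψ)
    (s : Finset ι) : ‖∑ j ∈ s, tensorSq (ψ j)‖ = √s.card := by
  classical
  rw [← Real.sqrt_sq (norm_nonneg _), ← real_inner_self_eq_norm_sq, sum_inner]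
  congr 1
  simp_rw [inner_sum, inner_tensorSq, orthonormal_iff_ite.mp hψ]
  simp

noncomputable def empiricalMomentTensor {N : ℕ} (y : Fin N → H) :
    UniformSpace.Completion (H ⊗[ℝ] H) :=
  (N : ℝ)⁻¹ • ∑ k, tensorSq (y k)

theorem inner_tensorSq_empiricalMomentTensor {N : ℕ} (c : H) (y : Fin N → H) :
    ⟪tensorSq c, empiricalMomentTensor y⟫ = (N : ℝ)⁻¹ * ∑ k, ⟪c, y k⟫ ^ 2 := by
  simp_rw [empiricalMomentTensor, real_inner_smul_right, inner_sum, inner_tensorSq]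

theorem empiricalMomentTensor_sub {N : ℕ} (hN : 0 < N) (y : Fin N → H)
    (C : UniformSpace.Completion (H ⊗[ℝ] H)) :
    empiricalMomentTensor y - C = (N : ℝ)⁻¹ • ∑ k, (tensorSq (y k) - C) := by
  rw [Finset.sum_sub_distrib, smul_sub, Finset.sum_const, Finset.card_univ, Fintype.card_fin,
    ← Nat.cast_smul_eq_nsmul ℝ, smul_smul, inv_mul_cancel₀ (by positivity), one_smul,
    empiricalMomentTensor]

end TensorSquare

section Integration

theorem integral_comp_of_map_eq {α β E : Type*} [MeasurableSpace α] [MeasurableSpace β]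
    [NormedAddCommGroup E] [NormedSpace ℝ E] {μ : Measure α} {ν : Measure β} {y : α → β}
    (hy : AEMeasurable y μ) (hlaw : μ.map y = ν) {f : β → E} (hf : AEStronglyMeasurable f ν) :
    ∫ a, f (y a) ∂μ = ∫ b, f b ∂ν := by
  subst hlaw
  exact (integral_map hy hf).symm

theorem integrable_norm_sq_of_integrable_norm_pow_four {α E : Type*} [MeasurableSpace α]
    {μ : Measure α} [IsFiniteMeasure μ] [NormedAddCommGroup E] {f : α → E}
    (hf : AEStronglyMeasurable f μ) (h4 : Integrable (fun a => ‖f a‖ ^ 4) μ) :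
    Integrable (fun a => ‖f a‖ ^ 2) μ :=
  (h4.add (integrable_const 1)).mono' (hf.norm.pow 2) (ae_of_all _ fun a => by
    simp only [Pi.add_apply, Real.norm_eq_abs, abs_pow, abs_norm]
    nlinarith [sq_nonneg (‖f a‖ ^ 2 - 1)])

theorem integrable_norm_comp_pow_four {X Y : Type*} [MeasurableSpace X] [NormedAddCommGroup X]
    [NormedAddCommGroup Y] {μ : Measure X} [IsFiniteMeasure μ] {Ψ : X → Y}
    (hΨm : AEStronglyMeasurable Ψ μ) {L : ℝ} (hΨ : ∀ x z, ‖Ψ x - Ψ z‖ ≤ L * ‖x - z‖)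
    (h4 : Integrable (fun x => ‖x‖ ^ 4) μ) :
    Integrable (fun x => ‖Ψ x‖ ^ 4) μ := by
  refine ((integrable_const (2 ^ 3 * ‖Ψ 0‖ ^ 4)).add (h4.const_mul (2 ^ 3 * L ^ 4))).mono'
    (hΨm.norm.pow 4) (ae_of_all _ fun x => ?_)
  have hLip := hΨ x 0
  rw [sub_zero] at hLip
  have hLx : 0 ≤ L * ‖x‖ := (norm_nonneg _).trans hLip
  rw [Real.norm_eq_abs, abs_pow, abs_norm]
  calc ‖Ψ x‖ ^ 4 ≤ (‖Ψ 0‖ + L * ‖x‖) ^ 4 := by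
        gcongr
        linarith [norm_sub_norm_le (Ψ x) (Ψ 0)]
    _ ≤ 2 ^ 3 * (‖Ψ 0‖ ^ 4 + (L * ‖x‖) ^ 4) := add_pow_le (norm_nonneg _) hLx 4
    _ = _ := by simp only [Pi.add_apply]; ring

variable {Ω K : Type*} [MeasurableSpace Ω] {P : Measure Ω}
  [NormedAddCommGroup K] [InnerProductSpace ℝ K]

theorem MeasureTheory.MemLp.integrable_inner {f g : Ω → K} (hf : MemLp f 2 P)
    (hg : MemLp g 2 P) : Integrable (fun ω => ⟪f ω, g ω⟫) P := by
  refine (hf.norm.integrable_mul hg.norm).mono (hf.1.inner hg.1) (ae_of_all _ fun ω => ?_)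
  simpa using abs_real_inner_le_norm (f ω) (g ω)

theorem integral_norm_sum_sq_eq_sum {ι : Type*} [Fintype ι] {Z : ι → Ω → K}
    (hZ : ∀ k, MemLp (Z k) 2 P) (horth : ∀ k l, k ≠ l → ∫ ω, ⟪Z k ω, Z l ω⟫ ∂P = 0) :
    ∫ ω, ‖∑ k, Z k ω‖ ^ 2 ∂P = ∑ k, ∫ ω, ‖Z k ω‖ ^ 2 ∂P := by
  have hint : ∀ k l, Integrable (fun ω => ⟪Z k ω, Z l ω⟫) P :=
    fun k l => (hZ k).integrable_inner (hZ l)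
  simp_rw [← real_inner_self_eq_norm_sq, sum_inner, inner_sum]
  rw [integral_finsetSum _ fun k _ => integrable_finsetSum _ fun l _ => hint k l]
  refine Finset.sum_congr rfl fun k _ => ?_
  rw [integral_finsetSum _ fun l _ => hint k l]
  exact Finset.sum_eq_single k (fun l _ hlk => horth k l hlk.symm) (by simp)

theorem integral_le_sqrt_integral_sq [IsProbabilityMeasure P] {f : Ω → ℝ} (hf : MemLp f 2 P) :
    ∫ ω, f ω ∂P ≤ √(∫ ω, f ω ^ 2 ∂P) := by
  refine (le_abs_self _).trans (Real.abs_le_sqrt ?_)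
  have hvar := variance_nonneg f P
  rw [variance_eq_sub hf] at hvar
  simpa using hvar

variable [CompleteSpace K]

theorem integral_norm_sub_integral_sq_le [IsProbabilityMeasure P] {f : Ω → K}
    (hf : MemLp f 2 P) : ∫ ω, ‖f ω - ∫ ω', f ω' ∂P‖ ^ 2 ∂P ≤ ∫ ω, ‖f ω‖ ^ 2 ∂P := by
  set c := ∫ ω, f ω ∂P
  have hf1 : Integrable f P := hf.integrable one_le_two
  have hf2 : Integrable (fun ω => ‖f ω‖ ^ 2) P :=
    (memLp_two_iff_integrable_sq_norm hf.1).mp hf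
  have hcross : Integrable (fun ω => 2 * ⟪f ω, c⟫) P := (hf1.inner_const c).const_mul 2
  simp_rw [norm_sub_sq_real]
  rw [integral_add (f := fun ω => ‖f ω‖ ^ 2 - 2 * ⟪f ω, c⟫) (hf2.sub hcross) (integrable_const _),
    integral_sub hf2 hcross, integral_const_mul, integral_const]
  simp_rw [real_inner_comm c]
  rw [integral_inner hf1, real_inner_self_eq_norm_sq]
  simp only [probReal_univ, one_smul]
  linarith [sq_nonneg ‖c‖]

theorem ProbabilityTheory.IndepFun.integral_inner_comp_eq_zero [IsFiniteMeasure P]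
    {H : Type*} [MeasurableSpace H] {ν : Measure H} {y₁ y₂ : Ω → H} (hind : IndepFun y₁ y₂ P)
    (hy₁ : AEMeasurable y₁ P) (hy₂ : AEMeasurable y₂ P) (h₁ : P.map y₁ = ν) (h₂ : P.map y₂ = ν)
    {G : H → K} (hG : Integrable G ν) (hG0 : ∫ u, G u ∂ν = 0) :
    ∫ ω, ⟪G (y₁ ω), G (y₂ ω)⟫ ∂P = 0 := by
  have : IsFiniteMeasure ν := h₁ ▸ inferInstance
  have hmap : P.map (fun ω => (y₁ ω, y₂ ω)) = ν.prod ν := by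
    rw [(indepFun_iff_map_prod_eq_prod_map_map hy₁ hy₂).mp hind, h₁, h₂]
  have hmeas : AEStronglyMeasurable (fun p : H × H => ⟪G p.1, G p.2⟫) (ν.prod ν) :=
    hG.1.comp_fst.inner hG.1.comp_snd
  have hint : Integrable (fun p : H × H => ⟪G p.1, G p.2⟫) (ν.prod ν) :=
    (hG.norm.mul_prod hG.norm).mono hmeas
      (ae_of_all _ fun p => by simpa using abs_real_inner_le_norm (G p.1) (G p.2))
  calc ∫ ω, ⟪G (y₁ ω), G (y₂ ω)⟫ ∂P
      = ∫ p, ⟪G p.1, G p.2⟫ ∂(ν.prod ν) := by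
        rw [← hmap, integral_map (hy₁.prodMk hy₂) (hmap ▸ hmeas)]
    _ = ∫ u, ⟪G u, ∫ v, G v ∂ν⟫ ∂ν := by
        rw [integral_prod _ hint]
        simp_rw [integral_inner hG]
    _ = 0 := by simp [hG0]

end Integration

section Moments

variable {H : Type*} [NormedAddCommGroup H] [InnerProductSpace ℝ H] [MeasurableSpace H]
  {ν : Measure H}

/-- `R^ν(span φ)` in the paper's notation, for an orthonormal family `φ`. -/
noncomputable def reconstructionError (ν : Measure H) {ι : Type*} [Fintype ι] (φ : ι → H) : ℝ :=
  ∫ z, ‖z - ∑ j, ⟪φ j, z⟫ • φ j‖ ^ 2 ∂ν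

/-- The uncentred covariance operator of `ν`, as a Hilbert–Schmidt tensor. -/
noncomputable def momentTensor (ν : Measure H) : UniformSpace.Completion (H ⊗[ℝ] H) :=
  ∫ z, tensorSq z ∂ν

variable [BorelSpace H]

theorem integrable_inner_sq (h2 : Integrable (fun z => ‖z‖ ^ 2) ν) (c : H) :
    Integrable (fun z => ⟪c, z⟫ ^ 2) ν :=
  (h2.const_mul (‖c‖ ^ 2)).mono' (by fun_prop) (ae_of_all _ fun z => by
    rw [Real.norm_eq_abs, abs_pow, ← mul_pow]
    exact pow_le_pow_left₀ (abs_nonneg _) (abs_real_inner_le_norm c z) 2)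

theorem reconstructionError_eq {ι : Type*} [Fintype ι] {φ : ι → H} (hφ : Orthonormal ℝ φ)
    (h2 : Integrable (fun z => ‖z‖ ^ 2) ν) :
    reconstructionError ν φ = ∫ z, ‖z‖ ^ 2 ∂ν - ∑ j, ∫ z, ⟪φ j, z⟫ ^ 2 ∂ν := by
  simp_rw [reconstructionError, hφ.norm_sub_sum_inner_smul_sq]
  rw [integral_sub h2 (integrable_finsetSum _ fun j _ => integrable_inner_sq h2 _),
    integral_finsetSum _ fun j _ => integrable_inner_sq h2 _]

variable [SecondCountableTopology H]

theorem integrable_tensorSq (h2 : Integrable (fun z => ‖z‖ ^ 2) ν) : Integrable tensorSq ν :=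
  h2.congr' continuous_tensorSq.aestronglyMeasurable (ae_of_all _ fun z => by
    simp [norm_tensorSq])

theorem memLp_tensorSq (h4 : Integrable (fun z => ‖z‖ ^ 4) ν) : MemLp tensorSq 2 ν := by
  refine (memLp_two_iff_integrable_sq_norm continuous_tensorSq.aestronglyMeasurable).mpr ?_
  simpa [norm_tensorSq, ← pow_mul] using h4

theorem inner_tensorSq_momentTensor (h2 : Integrable (fun z => ‖z‖ ^ 2) ν) (c : H) :
    ⟪tensorSq c, momentTensor ν⟫ = ∫ z, ⟪c, z⟫ ^ 2 ∂ν := by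
  simp_rw [momentTensor, ← integral_inner (integrable_tensorSq h2), inner_tensorSq]

theorem reconstructionError_le_of_empiricalVariance_le (h2 : Integrable (fun z => ‖z‖ ^ 2) ν)
    {d N : ℕ} {φ ψ : Fin d → H} (hψ : Orthonormal ℝ ψ) (y : Fin N → H)
    (hopt : ∑ j, (N : ℝ)⁻¹ * ∑ k, ⟪φ j, y k⟫ ^ 2 ≤ ∑ j, (N : ℝ)⁻¹ * ∑ k, ⟪ψ j, y k⟫ ^ 2) :
    reconstructionError ν ψ ≤ ∫ z, ‖z‖ ^ 2 ∂ν - ∑ j, (N : ℝ)⁻¹ * ∑ k, ⟪φ j, y k⟫ ^ 2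
      + √d * ‖empiricalMomentTensor y - momentTensor ν‖ := by
  have hpop : ∑ j, ∫ z, ⟪ψ j, z⟫ ^ 2 ∂ν = ⟪∑ j, tensorSq (ψ j), momentTensor ν⟫ := by
    simp_rw [sum_inner, inner_tensorSq_momentTensor h2]
  have hemp : ∑ j, (N : ℝ)⁻¹ * ∑ k, ⟪ψ j, y k⟫ ^ 2
      = ⟪∑ j, tensorSq (ψ j), empiricalMomentTensor y⟫ := by
    simp_rw [sum_inner, inner_tensorSq_empiricalMomentTensor]
  have hcs := real_inner_le_norm (∑ j, tensorSq (ψ j)) (empiricalMomentTensor y - momentTensor ν)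
  rw [hψ.norm_sum_tensorSq, Finset.card_univ, Fintype.card_fin, inner_sub_right, ← hpop,
    ← hemp] at hcs
  rw [reconstructionError_eq hψ h2]
  linarith

end Moments

section Sampling

variable {H Ω : Type*} [NormedAddCommGroup H] [InnerProductSpace ℝ H] [MeasurableSpace H]
  [BorelSpace H] [SecondCountableTopology H] {ν : Measure H} [IsProbabilityMeasure ν]
  [MeasurableSpace Ω] {P : Measure Ω} {N : ℕ} {y : Fin N → Ω → H}

theorem memLp_tensorSq_sub_momentTensor_comp (h4 : Integrable (fun z => ‖z‖ ^ 4) ν)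
    {z : Ω → H} (hz : AEMeasurable z P) (hzlaw : P.map z = ν) :
    MemLp (fun ω => tensorSq (z ω) - momentTensor ν) 2 P := by
  have hG : MemLp (fun u => tensorSq u - momentTensor ν) 2 ν :=
    (memLp_tensorSq h4).sub (memLp_const _)
  exact (by rwa [hzlaw] : MemLp _ 2 (P.map z)).comp_of_map hz

theorem memLp_empiricalMomentTensor_sub (h4 : Integrable (fun z => ‖z‖ ^ 4) ν) (hN : 0 < N)
    (hy : ∀ k, Measurable (y k)) (hlaw : ∀ k, P.map (y k) = ν) :
    MemLp (fun ω => empiricalMomentTensor (fun k => y k ω) - momentTensor ν) 2 P := by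
  simp_rw [empiricalMomentTensor_sub hN]
  exact (memLp_finsetSum _ fun k _ => memLp_tensorSq_sub_momentTensor_comp h4
    (hy k).aemeasurable (hlaw k)).const_smul ((N : ℝ)⁻¹)

variable [IsProbabilityMeasure P]

theorem integral_norm_empiricalMomentTensor_sub_sq_le (h4 : Integrable (fun z => ‖z‖ ^ 4) ν)
    (hN : 0 < N) (hy : ∀ k, Measurable (y k)) (hlaw : ∀ k, P.map (y k) = ν)
    (hind : ∀ k l, k ≠ l → IndepFun (y k) (y l) P) :
    ∫ ω, ‖empiricalMomentTensor (fun k => y k ω) - momentTensor ν‖ ^ 2 ∂P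
      ≤ (∫ z, ‖z‖ ^ 4 ∂ν) / N := by
  set G : H → UniformSpace.Completion (H ⊗[ℝ] H) := fun u => tensorSq u - momentTensor ν
  have h2 := integrable_norm_sq_of_integrable_norm_pow_four aestronglyMeasurable_id h4
  have hG0 : ∫ u, G u ∂ν = 0 := by
    simp [G, integral_sub (integrable_tensorSq h2) (integrable_const _), momentTensor]
  have hZ : ∀ k, MemLp (fun ω => G (y k ω)) 2 P := fun k =>
    memLp_tensorSq_sub_momentTensor_comp h4 (hy k).aemeasurable (hlaw k)
  have horth : ∀ k l, k ≠ l → ∫ ω, ⟪G (y k ω), G (y l ω)⟫ ∂P = 0 := fun k l hkl =>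
    (hind k l hkl).integral_inner_comp_eq_zero (hy k).aemeasurable (hy l).aemeasurable
      (hlaw k) (hlaw l) ((memLp_tensorSq h4).integrable one_le_two |>.sub (integrable_const _)) hG0
  have hvar : ∀ k, ∫ ω, ‖G (y k ω)‖ ^ 2 ∂P ≤ ∫ z, ‖z‖ ^ 4 ∂ν := fun k => by
    rw [integral_comp_of_map_eq (f := fun u => ‖G u‖ ^ 2) (hy k).aemeasurable (hlaw k)
      ((continuous_tensorSq.sub continuous_const).norm.pow 2).aestronglyMeasurable]
    calc ∫ u, ‖G u‖ ^ 2 ∂ν ≤ ∫ u, ‖tensorSq u‖ ^ 2 ∂ν :=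
          integral_norm_sub_integral_sq_le (memLp_tensorSq h4)
      _ = ∫ z, ‖z‖ ^ 4 ∂ν := by simp_rw [norm_tensorSq, ← pow_mul]
  simp_rw [empiricalMomentTensor_sub hN, norm_smul, mul_pow]
  rw [integral_const_mul, integral_norm_sum_sq_eq_sum hZ horth, norm_inv, Real.norm_natCast]
  calc ((N : ℝ)⁻¹) ^ 2 * ∑ k, ∫ ω, ‖G (y k ω)‖ ^ 2 ∂P
      ≤ ((N : ℝ)⁻¹) ^ 2 * ∑ _k : Fin N, ∫ z, ‖z‖ ^ 4 ∂ν := by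
        gcongr with k
        exact hvar k
    _ = (∫ z, ‖z‖ ^ 4 ∂ν) / N := by
        rw [Finset.sum_const, Finset.card_univ, Fintype.card_fin, nsmul_eq_mul]
        field_simp

theorem integral_norm_empiricalMomentTensor_sub_le (h4 : Integrable (fun z => ‖z‖ ^ 4) ν)
    (hN : 0 < N) (hy : ∀ k, Measurable (y k)) (hlaw : ∀ k, P.map (y k) = ν)
    (hind : ∀ k l, k ≠ l → IndepFun (y k) (y l) P) :
    ∫ ω, ‖empiricalMomentTensor (fun k => y k ω) - momentTensor ν‖ ∂P
      ≤ √((∫ z, ‖z‖ ^ 4 ∂ν) / N) :=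
  (integral_le_sqrt_integral_sq (memLp_empiricalMomentTensor_sub h4 hN hy hlaw).norm).trans
    (Real.sqrt_le_sqrt (integral_norm_empiricalMomentTensor_sub_sq_le h4 hN hy hlaw hind))

/-- The empirical frames `ψ` need not depend measurably on the samples, hence the integrable
majorant `g` of their reconstruction error. -/
theorem exists_integrable_reconstructionError_le (h4 : Integrable (fun z => ‖z‖ ^ 4) ν)
    (hN : 0 < N) (hy : ∀ k, Measurable (y k)) (hlaw : ∀ k, P.map (y k) = ν)
    (hind : ∀ k l, k ≠ l → IndepFun (y k) (y l) P) {d : ℕ} {φ : Fin d → H} (hφ : Orthonormal ℝ φ)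
    {ψ : Fin d → Ω → H} (hψ : ∀ ω, Orthonormal ℝ fun j => ψ j ω)
    (hopt : ∀ ω, ∑ j, (N : ℝ)⁻¹ * ∑ k, ⟪φ j, y k ω⟫ ^ 2
      ≤ ∑ j, (N : ℝ)⁻¹ * ∑ k, ⟪ψ j ω, y k ω⟫ ^ 2) :
    ∃ g : Ω → ℝ, Integrable g P ∧ (∀ ω, reconstructionError ν (fun j => ψ j ω) ≤ g ω) ∧
      ∫ ω, g ω ∂P ≤ √((∫ z, ‖z‖ ^ 4 ∂ν) * d / N) + reconstructionError ν φ := by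
  have h2 := integrable_norm_sq_of_integrable_norm_pow_four aestronglyMeasurable_id h4
  have hsample : ∀ j k, Integrable (fun ω => ⟪φ j, y k ω⟫ ^ 2) P := fun j k =>
    Integrable.comp_aemeasurable (g := fun z => ⟪φ j, z⟫ ^ 2)
      (by rw [hlaw k]; exact integrable_inner_sq h2 (φ j)) (hy k).aemeasurable
  have hemp : Integrable (fun ω => ∑ j, (N : ℝ)⁻¹ * ∑ k, ⟪φ j, y k ω⟫ ^ 2) P :=
    integrable_finsetSum _ fun j _ => (integrable_finsetSum _ fun k _ => hsample j k).const_mul _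
  have hemp_mean : ∫ ω, ∑ j, (N : ℝ)⁻¹ * ∑ k, ⟪φ j, y k ω⟫ ^ 2 ∂P
      = ∑ j, ∫ z, ⟪φ j, z⟫ ^ 2 ∂ν := by
    rw [integral_finsetSum _ fun j _ => (integrable_finsetSum _ fun k _ => hsample j k).const_mul _]
    refine Finset.sum_congr rfl fun j _ => ?_
    rw [integral_const_mul, integral_finsetSum _ fun k _ => hsample j k]
    simp_rw [integral_comp_of_map_eq (f := fun z => ⟪φ j, z⟫ ^ 2) (hy _).aemeasurable (hlaw _)
      (by fun_prop)]
    rw [Finset.sum_const, Finset.card_univ, Fintype.card_fin, nsmul_eq_mul]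
    field_simp
  have hres : Integrable (fun ω => ∫ z, ‖z‖ ^ 2 ∂ν - ∑ j, (N : ℝ)⁻¹ * ∑ k, ⟪φ j, y k ω⟫ ^ 2) P :=
    (integrable_const _).sub hemp
  have hdev : Integrable (fun ω => ‖empiricalMomentTensor (fun k => y k ω) - momentTensor ν‖) P :=
    (memLp_empiricalMomentTensor_sub h4 hN hy hlaw).norm.integrable one_le_two
  refine ⟨fun ω => ∫ z, ‖z‖ ^ 2 ∂ν - ∑ j, (N : ℝ)⁻¹ * ∑ k, ⟪φ j, y k ω⟫ ^ 2
      + √d * ‖empiricalMomentTensor (fun k => y k ω) - momentTensor ν‖,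
    hres.add (hdev.const_mul √d),
    fun ω => reconstructionError_le_of_empiricalVariance_le h2 (hψ ω) _ (hopt ω), ?_⟩
  rw [integral_add hres (hdev.const_mul √d), integral_sub (integrable_const _) hemp,
    integral_const, integral_const_mul, hemp_mean, reconstructionError_eq hφ h2]
  have hdev_le := mul_le_mul_of_nonneg_left
    (integral_norm_empiricalMomentTensor_sub_le h4 hN hy hlaw hind) (Real.sqrt_nonneg d)
  rw [← Real.sqrt_mul (Nat.cast_nonneg d), mul_div_assoc', mul_comm (d : ℝ)] at hdev_le
  simp only [probReal_univ, one_smul]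
  linarith

end Sampling

section PCAApproximation

variable {X Y : Type*} [NormedAddCommGroup X] [MeasurableSpace X] [BorelSpace X]
  [NormedAddCommGroup Y] [InnerProductSpace ℝ Y] [MeasurableSpace Y] [BorelSpace Y]
  {μ : Measure X} {Ψ : X → Y}

theorem reconstructionError_map (hΨ : Continuous Ψ) {ι : Type*} [Fintype ι] (φ : ι → Y) :
    reconstructionError (μ.map Ψ) φ = ∫ v, ‖Ψ v - ∑ j, ⟪φ j, Ψ v⟫ • φ j‖ ^ 2 ∂μ :=
  integral_map hΨ.aemeasurable (Continuous.aestronglyMeasurable (by fun_prop))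

variable [InnerProductSpace ℝ X] {dX dY : ℕ}

def pcaApprox (ψX : Fin dX → X) (ψY : Fin dY → Y) (Ψ : X → Y) (v : X) : Y :=
  ∑ j, ⟪ψY j, Ψ (∑ i, ⟪ψX i, v⟫ • ψX i)⟫ • ψY j

theorem integral_norm_pcaApprox_sub_sq_le (hΨc : Continuous Ψ) {L : ℝ}
    (hΨ : ∀ x z, ‖Ψ x - Ψ z‖ ≤ L * ‖x - z‖) (hμ2 : Integrable (fun x => ‖x‖ ^ 2) μ)
    (hΨ2 : Integrable (fun x => ‖Ψ x‖ ^ 2) μ) {ψX : Fin dX → X} (hψX : Orthonormal ℝ ψX)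
    {ψY : Fin dY → Y} (hψY : Orthonormal ℝ ψY) :
    ∫ v, ‖pcaApprox ψX ψY Ψ v - Ψ v‖ ^ 2 ∂μ
      ≤ 2 * L ^ 2 * reconstructionError μ ψX + 2 * reconstructionError (μ.map Ψ) ψY := by
  have hX : Integrable (fun v => ‖v - ∑ i, ⟪ψX i, v⟫ • ψX i‖ ^ 2) μ :=
    hμ2.mono' (Continuous.aestronglyMeasurable (by fun_prop)) (ae_of_all _ fun v => by
      simpa using hψX.norm_sub_sum_inner_smul_sq_le Finset.univ v)
  have hY : Integrable (fun v => ‖Ψ v - ∑ j, ⟪ψY j, Ψ v⟫ • ψY j‖ ^ 2) μ :=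
    hΨ2.mono' (Continuous.aestronglyMeasurable (by fun_prop)) (ae_of_all _ fun v => by
      simpa using hψY.norm_sub_sum_inner_smul_sq_le Finset.univ (Ψ v))
  rw [reconstructionError_map hΨc, reconstructionError, ← integral_const_mul,
    ← integral_const_mul, ← integral_add (hX.const_mul _) (hY.const_mul _)]
  exact integral_mono_of_nonneg (ae_of_all _ fun v => sq_nonneg _)
    ((hX.const_mul _).add (hY.const_mul _))
    (ae_of_all _ fun v => hψY.norm_sum_inner_comp_smul_sub_sq_le _ hΨ _ v)

theorem integral_integral_norm_pcaApprox_sub_sq_le {Ω : Type*} [MeasurableSpace Ω]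
    {P : Measure Ω} (hΨc : Continuous Ψ) {L : ℝ} (hΨ : ∀ x z, ‖Ψ x - Ψ z‖ ≤ L * ‖x - z‖)
    (hμ2 : Integrable (fun x => ‖x‖ ^ 2) μ) (hΨ2 : Integrable (fun x => ‖Ψ x‖ ^ 2) μ)
    {ψX : Fin dX → Ω → X} (hψX : ∀ ω, Orthonormal ℝ fun i => ψX i ω)
    {ψY : Fin dY → Ω → Y} (hψY : ∀ ω, Orthonormal ℝ fun j => ψY j ω)
    {gX gY : Ω → ℝ} (hgX : Integrable gX P) (hgY : Integrable gY P)
    (hRX : ∀ ω, reconstructionError μ (fun i => ψX i ω) ≤ gX ω)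
    (hRY : ∀ ω, reconstructionError (μ.map Ψ) (fun j => ψY j ω) ≤ gY ω) :
    ∫ ω, ∫ v, ‖pcaApprox (fun i => ψX i ω) (fun j => ψY j ω) Ψ v - Ψ v‖ ^ 2 ∂μ ∂P
      ≤ 2 * L ^ 2 * ∫ ω, gX ω ∂P + 2 * ∫ ω, gY ω ∂P := by
  rw [← integral_const_mul, ← integral_const_mul,
    ← integral_add (hgX.const_mul _) (hgY.const_mul _)]
  refine integral_mono_of_nonneg (ae_of_all _ fun ω => integral_nonneg fun v => sq_nonneg _)
    ((hgX.const_mul _).add (hgY.const_mul _)) (ae_of_all _ fun ω => ?_)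
  dsimp only
  exact (integral_norm_pcaApprox_sub_sq_le hΨc hΨ hμ2 hΨ2 (hψX ω) (hψY ω)).trans
    (by gcongr; exacts [hRX ω, hRY ω])

end PCAApproximation

theorem psi_pca_error_bound_general
    {X Y : Type*}
    [NormedAddCommGroup X] [InnerProductSpace ℝ X]
    [TopologicalSpace.SeparableSpace X] [MeasurableSpace X] [BorelSpace X]
    [NormedAddCommGroup Y] [InnerProductSpace ℝ Y]
    [TopologicalSpace.SeparableSpace Y] [MeasurableSpace Y] [BorelSpace Y]
    (μ : Measure X) [IsProbabilityMeasure μ]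
    (hmom4 : Integrable (fun x : X => ‖x‖ ^ 4) μ)
    (Ψ : X → Y)
    (L : ℝ) (hΨ : ∀ x z : X, ‖Ψ x - Ψ z‖ ≤ L * ‖x - z‖)
    -- population PCA bases: orthonormal families maximizing the population variance
    (φX : ℕ → X) (hφX : Orthonormal ℝ φX)
    (φY : ℕ → Y) (hφY : Orthonormal ℝ φY) :
    ∃ Q : ℝ, 0 ≤ Q ∧
      ∀ (dX dY N : ℕ), 1 ≤ dX → 1 ≤ dY → dX ≤ N → dY ≤ N →
      ∀ (Ω : Type) (_ : MeasurableSpace Ω) (P : Measure Ω), IsProbabilityMeasure P →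
      ∀ (x : Fin N → Ω → X), (∀ k, Measurable (x k)) →
        ProbabilityTheory.iIndepFun x P →
        (∀ k, P.map (x k) = μ) →
      -- empirical PCA bases for the inputs and the outputs
      ∀ (ψX : Fin dX → Ω → X), (∀ ω, Orthonormal ℝ (fun j => ψX j ω)) →
        (∀ ω (χ : Fin dX → X), Orthonormal ℝ χ →
          (∑ j : Fin dX, (N : ℝ)⁻¹ * ∑ k, ⟪χ j, x k ω⟫ ^ 2)
            ≤ ∑ j : Fin dX, (N : ℝ)⁻¹ * ∑ k, ⟪ψX j ω, x k ω⟫ ^ 2) →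
      ∀ (ψY : Fin dY → Ω → Y), (∀ ω, Orthonormal ℝ (fun j => ψY j ω)) →
        (∀ ω (χ : Fin dY → Y), Orthonormal ℝ χ →
          (∑ j : Fin dY, (N : ℝ)⁻¹ * ∑ k, ⟪χ j, Ψ (x k ω)⟫ ^ 2)
            ≤ ∑ j : Fin dY, (N : ℝ)⁻¹ * ∑ k, ⟪ψY j ω, Ψ (x k ω)⟫ ^ 2) →
      (∫ ω, ∫ v, ‖(∑ j : Fin dY,
            ⟪ψY j ω, Ψ (∑ i : Fin dX, ⟪ψX i ω, v⟫ • ψX i ω)⟫ • ψY j ω)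
            - Ψ v‖ ^ 2 ∂μ ∂P)
        ≤ 2 * L ^ 2 * (Real.sqrt (Q * dX / N)
              + ∫ v, ‖v - ∑ j ∈ Finset.range dX, ⟪φX j, v⟫ • φX j‖ ^ 2 ∂μ)
          + 2 * (Real.sqrt (Q * dY / N)
              + ∫ v, ‖Ψ v - ∑ j ∈ Finset.range dY, ⟪φY j, Ψ v⟫ • φY j‖ ^ 2 ∂μ) := by
  have := UniformSpace.secondCountable_of_separable X
  have := UniformSpace.secondCountable_of_separable Y
  have hΨc : Continuous Ψ :=
    (LipschitzWith.of_dist_le' (K := L) fun x z => by simpa [dist_eq_norm] using hΨ x z).continuous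
  have hΨ4 := integrable_norm_comp_pow_four hΨc.aestronglyMeasurable hΨ hmom4
  have hν4 : Integrable (fun w => ‖w‖ ^ 4) (μ.map Ψ) :=
    (integrable_map_measure (by fun_prop) hΨc.aemeasurable).mpr hΨ4
  have hμ2 := integrable_norm_sq_of_integrable_norm_pow_four aestronglyMeasurable_id hmom4
  have hΨ2 := integrable_norm_sq_of_integrable_norm_pow_four hΨc.aestronglyMeasurable hΨ4
  have := Measure.isProbabilityMeasure_map (μ := μ) hΨc.aemeasurable
  refine ⟨max (∫ v, ‖v‖ ^ 4 ∂μ) (∫ w, ‖w‖ ^ 4 ∂μ.map Ψ),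
    le_max_of_le_left (integral_nonneg fun v => by positivity), ?_⟩
  intro dX dY N hdX _ hdXN _ Ω _ P _ x hx hind hlaw ψX hψX hψXopt ψY hψY hψYopt
  have hN : 0 < N := hdX.trans hdXN
  have hφX' : Orthonormal ℝ fun j : Fin dX => φX j := hφX.comp _ Fin.val_injective
  have hφY' : Orthonormal ℝ fun j : Fin dY => φY j := hφY.comp _ Fin.val_injective
  obtain ⟨gX, hgX, hRX, hgX_le⟩ := exists_integrable_reconstructionError_le hmom4 hN hx hlaw
    (fun k l hkl => hind.indepFun hkl) hφX' hψX (fun ω => hψXopt ω _ hφX')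
  obtain ⟨gY, hgY, hRY, hgY_le⟩ := exists_integrable_reconstructionError_le hν4 hN
    (fun k => hΨc.measurable.comp (hx k))
    (fun k => by rw [← hlaw k, Measure.map_map hΨc.measurable (hx k)])
    (fun k l hkl => (hind.indepFun hkl).comp hΨc.measurable hΨc.measurable) hφY' hψY
    (fun ω => hψYopt ω _ hφY')
  calc _ ≤ 2 * L ^ 2 * ∫ ω, gX ω ∂P + 2 * ∫ ω, gY ω ∂P :=
        integral_integral_norm_pcaApprox_sub_sq_le hΨc hΨ hμ2 hΨ2 hψX hψY hgX hgY hRX hRY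
    _ ≤ _ := by
        simp only [Finset.sum_range]
        rw [← reconstructionError_map hΨc]
        gcongr
        · exact hgX_le.trans
            (add_le_add (Real.sqrt_le_sqrt (by gcongr; exact le_max_left _ _)) le_rfl)
        · exact hgY_le.trans
            (add_le_add (Real.sqrt_le_sqrt (by gcongr; exact le_max_right _ _)) le_rfl)

/-- Error bound for the PCA-based approximation `Ψ_PCA` of a globally Lipschitz
map `Ψ : X → Y`: with `V^X_{d_X,N}(ω)`, `V^Y_{d_Y,N}(ω)` the empirical PCA
subspaces (spanned by orthonormal families `ψX`, `ψY` maximizing the empirical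
variance among all orthonormal families of the same size) built from `N` i.i.d.
samples `x_k ∼ μ` and their images `Ψ(x_k)`, and with
`Ψ_PCA(x) = Π_{V^Y_{d_Y,N}} Ψ(Π_{V^X_{d_X,N}} x)`, there is a constant `Q ≥ 0`
depending only on `μ` and `Ψ_♯μ` such that
`E_samples E_{x∼μ} ‖Ψ_PCA(x) − Ψ(x)‖² ≤ 2L²(√(Q d_X/N) + R^μ(V^X_{d_X}))
  + 2(√(Q d_Y/N) + R^{Ψ_♯μ}(V^Y_{d_Y}))`,
where `V^X_{d_X}`, `V^Y_{d_Y}` are the optimal population PCA subspaces, spanned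
by the orthonormal families `φX`, `φY` maximizing the population variance. -/
theorem psi_pca_error_bound
    {X Y : Type*}
    [NormedAddCommGroup X] [InnerProductSpace ℝ X] [CompleteSpace X]
    [TopologicalSpace.SeparableSpace X] [MeasurableSpace X] [BorelSpace X]
    [NormedAddCommGroup Y] [InnerProductSpace ℝ Y] [CompleteSpace Y]
    [TopologicalSpace.SeparableSpace Y] [MeasurableSpace Y] [BorelSpace Y]
    (μ : Measure X) [IsProbabilityMeasure μ]
    (hmom4 : Integrable (fun x : X => ‖x‖ ^ 4) μ)
    (Ψ : X → Y) (hΨmeas : Measurable Ψ)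
    (L : ℝ) (hL : 0 ≤ L) (hΨ : ∀ x z : X, ‖Ψ x - Ψ z‖ ≤ L * ‖x - z‖)
    -- population PCA bases: orthonormal families maximizing the population variance
    (φX : ℕ → X) (hφX : Orthonormal ℝ φX)
    (hφXopt : ∀ (d : ℕ) (χ : Fin d → X), Orthonormal ℝ χ →
      (∑ j : Fin d, ∫ x, ⟪χ j, x⟫ ^ 2 ∂μ)
        ≤ ∑ j ∈ Finset.range d, ∫ x, ⟪φX j, x⟫ ^ 2 ∂μ)
    (φY : ℕ → Y) (hφY : Orthonormal ℝ φY)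
    (hφYopt : ∀ (d : ℕ) (χ : Fin d → Y), Orthonormal ℝ χ →
      (∑ j : Fin d, ∫ x, ⟪χ j, Ψ x⟫ ^ 2 ∂μ)
        ≤ ∑ j ∈ Finset.range d, ∫ x, ⟪φY j, Ψ x⟫ ^ 2 ∂μ) :
    ∃ Q : ℝ, 0 ≤ Q ∧
      ∀ (dX dY N : ℕ), 1 ≤ dX → 1 ≤ dY → dX ≤ N → dY ≤ N →
      ∀ (Ω : Type) (_ : MeasurableSpace Ω) (P : Measure Ω), IsProbabilityMeasure P →
      ∀ (x : Fin N → Ω → X), (∀ k, Measurable (x k)) →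
        ProbabilityTheory.iIndepFun x P →
        (∀ k, P.map (x k) = μ) →
      -- empirical PCA bases for the inputs and the outputs
      ∀ (ψX : Fin dX → Ω → X), (∀ ω, Orthonormal ℝ (fun j => ψX j ω)) →
        (∀ ω (χ : Fin dX → X), Orthonormal ℝ χ →
          (∑ j : Fin dX, (N : ℝ)⁻¹ * ∑ k, ⟪χ j, x k ω⟫ ^ 2)
            ≤ ∑ j : Fin dX, (N : ℝ)⁻¹ * ∑ k, ⟪ψX j ω, x k ω⟫ ^ 2) →
      ∀ (ψY : Fin dY → Ω → Y), (∀ ω, Orthonormal ℝ (fun j => ψY j ω)) →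
        (∀ ω (χ : Fin dY → Y), Orthonormal ℝ χ →
          (∑ j : Fin dY, (N : ℝ)⁻¹ * ∑ k, ⟪χ j, Ψ (x k ω)⟫ ^ 2)
            ≤ ∑ j : Fin dY, (N : ℝ)⁻¹ * ∑ k, ⟪ψY j ω, Ψ (x k ω)⟫ ^ 2) →
      (∫ ω, ∫ v, ‖(∑ j : Fin dY,
            ⟪ψY j ω, Ψ (∑ i : Fin dX, ⟪ψX i ω, v⟫ • ψX i ω)⟫ • ψY j ω)
            - Ψ v‖ ^ 2 ∂μ ∂P)
        ≤ 2 * L ^ 2 * (Real.sqrt (Q * dX / N)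
              + ∫ v, ‖v - ∑ j ∈ Finset.range dX, ⟪φX j, v⟫ • φX j‖ ^ 2 ∂μ)
          + 2 * (Real.sqrt (Q * dY / N)
              + ∫ v, ‖Ψ v - ∑ j ∈ Finset.range dY, ⟪φY j, Ψ v⟫ • φY j‖ ^ 2 ∂μ) :=
  psi_pca_error_bound_general μ hmom4 Ψ L hΨ φX hφX φY hφY
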